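/- Let a > 0 be real, let r ≥ 1 and b ≥ 0 be integers, set ρ = 1 + (a/2)(r−1) + b, and for a partition μ = (μ₁ ≥ … ≥ μ_r ≥ 0) of length ≤ r define h(μ) = ((ρ−b)_μ / (ρ)_μ) · ∏_{1≤i<j≤r} (1+(a/2)(j−i−1))_{μ_i−μ_j} / (1+(a/2)(j−i))_{μ_i−μ_j}. Let α, γ be partitions of length ≤ r−1 and k a natural number such that k + γ_j ≥ α_j for all 1 ≤ j ≤ r−1. Then any real sequence (c_m)_{m∈ℕ} satisfying c_m = h(m−k, γ)/h(m, α) for all m ≥ max(α₁, k+γ₁) belongs to the class 𝒮₊. -/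

import Mathlib

/-! Peeling off the largest part gives
`h(m, α) = (ρ−b)_m/(ρ)_m · ∏_j (1+(a/2)j)_{m−α_j}/(1+(a/2)(j+1))_{m−α_j} · h(α)`, where `h(α) > 0`
does not depend on `m`. In `c_m` every Pochhammer quotient then appears as
`((x)_{m−p}/(y)_{m−p}) / ((x)_{m−q}/(y)_{m−q})` with `q ≤ p` (this is where `k + γ_j ≥ α_j`
enters), which for `m ≥ p` is a product of `p − q` fractions
`(m+u)/(m+v) = 1 + (u−v)/(m+1) + O(m⁻²)`. Expansions `c₀ + c₁/(m+1) + O(m⁻²)` are stable under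
finite products, so `c_m` has one with `c₀ = h(γ)/h(α) > 0`. -/

open Finset

/-- The class `𝒮₊`: real sequences `c` for which there exist constants `c₀ > 0` and `c₁`
such that `m² · (c_m − c₀ − c₁/(m+1))` is a bounded sequence. -/
def SPlus (c : ℕ → ℝ) : Prop :=
  ∃ c₀ c₁ : ℝ, 0 < c₀ ∧ ∃ C : ℝ, ∀ m : ℕ,
    |(m : ℝ) ^ 2 * (c m - c₀ - c₁ / ((m : ℝ) + 1))| ≤ C

/-- The ascending Pochhammer symbol `(x)_n = x(x+1)⋯(x+n−1)`, with `(x)_0 = 1`. -/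
noncomputable def poch (x : ℝ) (n : ℕ) : ℝ := ∏ i ∈ Finset.range n, (x + i)

/-- The multi-variable Pochhammer symbol `(s)_λ = ∏_{i=1}^{r} (s − (a/2)(i−1))_{λ_i}`
(here the index `i` runs over `0, …, r−1`, so `(i−1)` becomes `i`). -/
noncomputable def pochMulti (a s : ℝ) (r : ℕ) (l : ℕ → ℕ) : ℝ :=
  ∏ i ∈ Finset.range r, poch (s - a / 2 * i) (l i)

/-- The squared Hardy norm `h(μ) = ‖N_μ‖²_S`:
`h(μ) = ((ρ−b)_μ/(ρ)_μ) · ∏_{1≤i<j≤r} (1+(a/2)(j−i−1))_{μ_i−μ_j}/(1+(a/2)(j−i))_{μ_i−μ_j}`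
with `ρ = 1 + (a/2)(r−1) + b`. -/
noncomputable def hnorm (a : ℝ) (r b : ℕ) (μ : ℕ → ℕ) : ℝ :=
  (pochMulti a (1 + a / 2 * ((r : ℝ) - 1)) r μ /
      pochMulti a (1 + a / 2 * ((r : ℝ) - 1) + b) r μ) *
    ∏ p ∈ (Finset.range r ×ˢ Finset.range r).filter (fun p => p.1 < p.2),
      poch (1 + a / 2 * ((p.2 : ℝ) - (p.1 : ℝ) - 1)) (μ p.1 - μ p.2) /
        poch (1 + a / 2 * ((p.2 : ℝ) - (p.1 : ℝ))) (μ p.1 - μ p.2)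

/-- The partition `(m, α)` of length `≤ r` obtained from a partition `α` of length `≤ r−1`
by prepending `m` as largest part. -/
def insertPart (m : ℕ) (α : ℕ → ℕ) : ℕ → ℕ := fun i => if i = 0 then m else α (i - 1)

open Asymptotics Filter

def HasTwoTermExpansion (f : ℕ → ℝ) (c₀ : ℝ) : Prop :=
  ∃ c₁ : ℝ, (fun m : ℕ => f m - c₀ - c₁ / ((m : ℝ) + 1)) =O[atTop]
    fun m : ℕ => 1 / ((m : ℝ) + 1) ^ 2

namespace HasTwoTermExpansion

variable {f g : ℕ → ℝ} {c₀ d₀ : ℝ}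

theorem const (c : ℝ) : HasTwoTermExpansion (fun _ => c) c :=
  ⟨0, by simpa using isBigO_zero _ _⟩

theorem congr' (h : HasTwoTermExpansion f c₀) (hfg : f =ᶠ[atTop] g) :
    HasTwoTermExpansion g c₀ := by
  obtain ⟨c₁, h⟩ := h
  exact ⟨c₁, h.congr' (hfg.mono fun m hm => by simp only [hm]) EventuallyEq.rfl⟩

theorem isBigO_one (h : HasTwoTermExpansion f c₀) : f =O[atTop] fun _ => (1 : ℝ) := by
  obtain ⟨c₁, h⟩ := h
  have hinv := tendsto_one_div_add_atTop_nhds_zero_nat (𝕜 := ℝ)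
  have hsq : (fun m : ℕ => 1 / ((m : ℝ) + 1) ^ 2) =O[atTop] fun _ => (1 : ℝ) :=
    ((hinv.pow 2).congr fun m => by rw [one_div_pow]).isBigO_one ℝ
  have hsum := (h.trans hsq).add ((isBigO_const_const c₀ one_ne_zero atTop).add
    ((hinv.const_mul c₁).isBigO_one ℝ))
  exact hsum.congr_left fun m => by ring

theorem mul (hf : HasTwoTermExpansion f c₀) (hg : HasTwoTermExpansion g d₀) :
    HasTwoTermExpansion (fun m => f m * g m) (c₀ * d₀) := by
  have hg_bdd := hg.isBigO_one
  obtain ⟨c₁, hE⟩ := hf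
  obtain ⟨d₁, hF⟩ := hg
  have hu := (tendsto_one_div_add_atTop_nhds_zero_nat (𝕜 := ℝ)).isBigO_one ℝ
  have hfirst : (fun m : ℕ => c₀ + c₁ / ((m : ℝ) + 1)) =O[atTop] fun _ => (1 : ℝ) :=
    (isBigO_const_const c₀ one_ne_zero atTop).add
      ((isBigO_const_mul_self c₁ _ _).trans hu |>.congr_left fun m => by ring)
  refine ⟨c₀ * d₁ + c₁ * d₀, ?_⟩
  -- with `E`, `F` the errors of `f`, `g`:
  -- `f g - c₀ d₀ - (c₀ d₁ + c₁ d₀)/(m+1) = E g + (c₀ + c₁/(m+1)) F + c₁ d₁/(m+1)²`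
  have hsum := (((hE.mul hg_bdd).congr_right fun m => mul_one _).add
    ((hfirst.mul hF).congr_right fun m => one_mul _)).add
    (isBigO_const_mul_self (c₁ * d₁) (fun m : ℕ => 1 / ((m : ℝ) + 1) ^ 2) atTop)
  exact hsum.congr_left fun m => by field_simp; ring

theorem prod {ι : Type*} (s : Finset ι) {f : ι → ℕ → ℝ} {c : ι → ℝ}
    (h : ∀ i ∈ s, HasTwoTermExpansion (f i) (c i)) :
    HasTwoTermExpansion (fun m => ∏ i ∈ s, f i m) (∏ i ∈ s, c i) := by
  induction s using Finset.cons_induction with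
  | empty => simpa using const 1
  | cons i s hi ih =>
    simp only [prod_cons]
    exact (h i (mem_cons_self i s)).mul (ih fun j hj => h j (mem_cons_of_mem hj))

theorem sPlus (h : HasTwoTermExpansion f c₀) (hc₀ : 0 < c₀) : SPlus f := by
  obtain ⟨c₁, h⟩ := h
  have hsq : (fun m : ℕ => (m : ℝ) ^ 2 * (1 / ((m : ℝ) + 1) ^ 2)) =O[atTop]
      fun _ => (1 : ℝ) := by
    refine isBigO_of_le _ fun m => ?_
    rw [norm_one, Real.norm_of_nonneg (by positivity), mul_one_div,
      div_le_one (by positivity)]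
    gcongr
    linarith
  obtain ⟨C, hC⟩ := isBigO_one_nat_atTop_iff.mp ((isBigO_refl _ _).mul h |>.trans hsq)
  exact ⟨c₀, c₁, hc₀, C, hC⟩

end HasTwoTermExpansion

theorem hasTwoTermExpansion_div_linear (u v : ℝ) :
    HasTwoTermExpansion (fun m : ℕ => ((m : ℝ) + u) / ((m : ℝ) + v)) 1 := by
  refine ⟨u - v, IsBigO.of_bound (2 * |(u - v) * (1 - v)|) ?_⟩
  filter_upwards [tendsto_natCast_atTop_atTop.eventually_ge_atTop (1 - 2 * v)] with m hm
  have hmv : ((m : ℝ) + 1) / 2 ≤ (m : ℝ) + v := by linarith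
  have hmv0 : (0 : ℝ) < (m : ℝ) + v := by linarith
  rw [show ((m : ℝ) + u) / ((m : ℝ) + v) - 1 - (u - v) / ((m : ℝ) + 1) =
      (u - v) * (1 - v) / (((m : ℝ) + 1) * ((m : ℝ) + v)) by field_simp; ring,
    Real.norm_eq_abs, Real.norm_eq_abs, abs_div, abs_of_pos (by positivity : (0 : ℝ) <
      ((m : ℝ) + 1) * ((m : ℝ) + v)), abs_of_pos (by positivity : (0 : ℝ) < 1 / ((m : ℝ) + 1) ^ 2)]
  calc |(u - v) * (1 - v)| / (((m : ℝ) + 1) * ((m : ℝ) + v))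
      ≤ |(u - v) * (1 - v)| / (((m : ℝ) + 1) * (((m : ℝ) + 1) / 2)) := by gcongr
    _ = 2 * |(u - v) * (1 - v)| * (1 / ((m : ℝ) + 1) ^ 2) := by field_simp

theorem poch_pos {x : ℝ} (hx : 0 < x) (n : ℕ) : 0 < poch x n :=
  prod_pos fun i _ => by positivity

theorem poch_add (x : ℝ) (n t : ℕ) : poch x (n + t) = poch x n * poch (x + n) t := by
  simp only [poch, prod_range_add, Nat.cast_add, add_assoc]

noncomputable def pochRatio (x y : ℝ) (n : ℕ) : ℝ := poch x n / poch y n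

theorem pochRatio_pos {x y : ℝ} (hx : 0 < x) (hy : 0 < y) (n : ℕ) : 0 < pochRatio x y n :=
  div_pos (poch_pos hx n) (poch_pos hy n)

theorem pochRatio_add (x y : ℝ) (n t : ℕ) :
    pochRatio x y (n + t) = pochRatio x y n * pochRatio (x + n) (y + n) t := by
  simp only [pochRatio, poch_add, mul_div_mul_comm]

theorem pochRatio_sub_div_pochRatio_sub {x y : ℝ} (hx : 0 < x) (hy : 0 < y) {p q m : ℕ}
    (hqp : q ≤ p) (hpm : p ≤ m) :
    pochRatio x y (m - p) / pochRatio x y (m - q) =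
      ∏ i ∈ range (p - q), ((m : ℝ) + (y - p + i)) / ((m : ℝ) + (x - p + i)) := by
  rw [show m - q = (m - p) + (p - q) by omega, pochRatio_add,
    div_mul_cancel_left₀ (pochRatio_pos hx hy _).ne', pochRatio, inv_div, poch, poch,
    ← prod_div_distrib, Nat.cast_sub hpm]
  refine prod_congr rfl fun i _ => ?_
  ring_nf

theorem hasTwoTermExpansion_pochRatio {x y : ℝ} (hx : 0 < x) (hy : 0 < y) {p q : ℕ}
    (hqp : q ≤ p) :
    HasTwoTermExpansion (fun m => pochRatio x y (m - p) / pochRatio x y (m - q)) 1 := by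
  have h := HasTwoTermExpansion.prod (range (p - q))
    fun i _ => hasTwoTermExpansion_div_linear (y - p + i) (x - p + i)
  rw [prod_const_one] at h
  exact h.congr' <| (eventually_ge_atTop p).mono fun m hpm =>
    (pochRatio_sub_div_pochRatio_sub hx hy hqp hpm).symm

theorem prod_upperPairs_succ {M : Type*} [CommMonoid M] (n : ℕ) (g : ℕ → ℕ → M) :
    ∏ p ∈ (range (n + 1) ×ˢ range (n + 1)).filter (fun p => p.1 < p.2), g p.1 p.2 =
      (∏ j ∈ range n, g 0 (j + 1)) *
        ∏ p ∈ (range n ×ˢ range n).filter (fun p => p.1 < p.2), g (p.1 + 1) (p.2 + 1) := by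
  simp only [prod_filter, prod_product, prod_range_succ', if_false,
    Nat.not_lt_zero, Nat.succ_pos, if_true, Nat.succ_lt_succ_iff, mul_one]
  exact mul_comm _ _

theorem pochMulti_succ (a s : ℝ) (n : ℕ) (μ : ℕ → ℕ) :
    pochMulti a s (n + 1) μ = poch s (μ 0) * pochMulti a (s - a / 2) n (fun i => μ (i + 1)) := by
  rw [pochMulti, prod_range_succ', mul_comm, pochMulti]
  congr 1
  · simp
  · refine prod_congr rfl fun i _ => ?_
    push_cast
    ring_nf

theorem hnorm_succ (a : ℝ) (n b : ℕ) (μ : ℕ → ℕ) :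
    hnorm a (n + 1) b μ =
      pochRatio (1 + a / 2 * n) (1 + a / 2 * n + b) (μ 0) *
        (∏ j ∈ range n, pochRatio (1 + a / 2 * j) (1 + a / 2 * (j + 1)) (μ 0 - μ (j + 1))) *
        hnorm a n b (fun i => μ (i + 1)) := by
  have hρ : (1 : ℝ) + a / 2 * n - a / 2 = 1 + a / 2 * ((n : ℝ) - 1) := by ring
  have hρb : (1 : ℝ) + a / 2 * n + b - a / 2 = 1 + a / 2 * ((n : ℝ) - 1) + b := by ring
  simp only [hnorm, pochRatio, Nat.cast_add, Nat.cast_one, add_sub_cancel_right, pochMulti_succ,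
    hρ, hρb]
  rw [prod_upperPairs_succ n (fun i j => poch (1 + a / 2 * ((j : ℝ) - i - 1)) (μ i - μ j) /
    poch (1 + a / 2 * ((j : ℝ) - i)) (μ i - μ j))]
  simp only [Nat.cast_add, Nat.cast_one, Nat.cast_zero, sub_zero, add_sub_cancel_right,
    add_sub_add_right_eq_sub, mul_div_mul_comm]
  ring

theorem hnorm_pos {a : ℝ} (ha : 0 ≤ a) (n b : ℕ) (μ : ℕ → ℕ) : 0 < hnorm a n b μ := by
  have hρ : ∀ i ∈ range n, 0 < 1 + a / 2 * ((n : ℝ) - 1) - a / 2 * i := fun i hi => by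
    have : (i : ℝ) + 1 ≤ n := by exact_mod_cast mem_range.mp hi
    nlinarith
  refine mul_pos (div_pos (prod_pos fun i hi => poch_pos (hρ i hi) _)
    (prod_pos fun i hi => poch_pos (by linarith [hρ i hi, (b.cast_nonneg : (0 : ℝ) ≤ b)]) _))
    (prod_pos fun p hp => div_pos (poch_pos ?_ _) (poch_pos ?_ _))
  all_goals
    have : (p.1 : ℝ) + 1 ≤ p.2 := by exact_mod_cast (mem_filter.mp hp).2
    nlinarith

@[simp]
theorem insertPart_zero (m : ℕ) (α : ℕ → ℕ) : insertPart m α 0 = m := rfl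

@[simp]
theorem insertPart_succ (m : ℕ) (α : ℕ → ℕ) (i : ℕ) : insertPart m α (i + 1) = α i := rfl

theorem hnorm_ratio_SPlus_general (a : ℝ) (ha : 0 < a) (r b : ℕ) (hr : 1 ≤ r)
    (α γ : ℕ → ℕ)
    (k : ℕ) (hk : ∀ j, j < r - 1 → α j ≤ k + γ j)
    (c : ℕ → ℝ)
    (hc : ∀ m : ℕ, max (α 0) (k + γ 0) ≤ m →
      c m = hnorm a r b (insertPart (m - k) γ) / hnorm a r b (insertPart m α)) :
    SPlus c := by
  obtain ⟨n, rfl⟩ : ∃ n, r = n + 1 := ⟨r - 1, by omega⟩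
  set P := pochRatio (1 + a / 2 * n) (1 + a / 2 * n + b)
  set Q := fun j : ℕ => pochRatio (1 + a / 2 * j) (1 + a / 2 * (j + 1))
  have hexp : HasTwoTermExpansion
      (fun m => hnorm a n b γ / hnorm a n b α * (P (m - k) / P (m - 0)) *
        ∏ j ∈ range n, Q j (m - (k + γ j)) / Q j (m - α j))
      (hnorm a n b γ / hnorm a n b α * 1 * ∏ j ∈ range n, 1) :=
    ((HasTwoTermExpansion.const _).mul
      (hasTwoTermExpansion_pochRatio (by positivity) (by positivity) k.zero_le)).mul
      (HasTwoTermExpansion.prod _ fun j hj =>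
        hasTwoTermExpansion_pochRatio (by positivity) (by positivity) (hk j (by simpa using hj)))
  refine (hexp.congr' ?_).sPlus
    (by simpa using div_pos (hnorm_pos ha.le n b γ) (hnorm_pos ha.le n b α))
  filter_upwards [eventually_ge_atTop (max (α 0) (k + γ 0))] with m hm
  rw [hc m hm, hnorm_succ, hnorm_succ, prod_div_distrib]
  simp only [insertPart_zero, insertPart_succ, Nat.sub_zero, Nat.sub_sub]
  ring

/-- Any real sequence satisfying `c_m = h(m−k,γ)/h(m,α)` for all `m ≥ max(α₁, k+γ₁)`
belongs to the class `𝒮₊`. -/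
theorem hnorm_ratio_SPlus (a : ℝ) (ha : 0 < a) (r b : ℕ) (hr : 1 ≤ r)
    (α γ : ℕ → ℕ) (hα : Antitone α) (hγ : Antitone γ)
    (hαlen : ∀ j, r - 1 ≤ j → α j = 0) (hγlen : ∀ j, r - 1 ≤ j → γ j = 0)
    (k : ℕ) (hk : ∀ j, j < r - 1 → α j ≤ k + γ j)
    (c : ℕ → ℝ)
    (hc : ∀ m : ℕ, max (α 0) (k + γ 0) ≤ m →
      c m = hnorm a r b (insertPart (m - k) γ) / hnorm a r b (insertPart m α)) :
    SPlus c :=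
  hnorm_ratio_SPlus_general a ha r b hr α γ k hk c hc
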